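/- arXiv:1001.3644 — 7 statements merged into one kernel-verified Lean document; each statement's English description precedes it below -/
import Mathlib

section
/- Let L be a locally convex topological vector space with dual L', and let f : L → ℝ ∪ {±∞} be quasiconvex and lower semicontinuous. Then for every X ∈ L, f(X) = sup over X' ∈ L' of R(X'(X), X'), where R(t, X') := inf { f(ξ) | ξ ∈ L, X'(ξ) ≥ t }. -/
/-! A functional separating `X` from the closed convex sublevel set `{f ≤ c}` (Hahn–Banach) has
its whole half-space `{X' ξ ≥ X' X}` outside that sublevel set, so `R (X' X) X' ≥ c`. Letting
`c` increase to `f X` gives `f X ≤ sup R`; the reverse inequality holds since `X` itself lies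
in every such half-space. -/

theorem exists_le_iInf_halfSpace_of_lt {L α : Type*} [AddCommGroup L] [Module ℝ L]
    [TopologicalSpace L] [IsTopologicalAddGroup L] [ContinuousSMul ℝ L] [LocallyConvexSpace ℝ L]
    [CompleteLinearOrder α] {f : L → α} {c : α} (hconv : Convex ℝ {x | f x ≤ c})
    (hclosed : IsClosed {x | f x ≤ c}) {X : L} (hc : c < f X) :
    ∃ X' : L →L[ℝ] ℝ, c ≤ ⨅ ξ ∈ {ξ : L | X' X ≤ X' ξ}, f ξ := by
  obtain ⟨X', u, hsub, hX⟩ := geometric_hahn_banach_closed_point hconv hclosed hc.not_ge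
  refine ⟨X', le_iInf₂ fun ξ hξ => le_of_lt ?_⟩
  by_contra! hξc
  exact (hsub ξ hξc).not_ge (hX.le.trans hξ)

/-- **Penot–Volle dual representation of quasiconvex lsc functions.**
Let `L` be a locally convex topological vector space with dual `L'` and
`f : L → EReal` quasiconvex and lower semicontinuous.  Then
`f X = ⨆ X' ∈ L', R (X' X) X'` where `R t X' = ⨅ {f ξ | X' ξ ≥ t}`. -/
theorem quasiconvex_dual_representation
    {L : Type*} [AddCommGroup L] [Module ℝ L] [TopologicalSpace L]
    [IsTopologicalAddGroup L] [ContinuousSMul ℝ L] [LocallyConvexSpace ℝ L]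
    (f : L → EReal)
    (hqc : ∀ c : ℝ, Convex ℝ {x : L | f x ≤ (c : EReal)})
    (hlsc : ∀ c : ℝ, IsClosed {x : L | f x ≤ (c : EReal)})
    (X : L) :
    f X = ⨆ X' : L →L[ℝ] ℝ, ⨅ ξ ∈ {ξ : L | X' X ≤ X' ξ}, f ξ := by
  refine le_antisymm ?_ (iSup_le fun X' => iInf₂_le X (le_refl (X' X)))
  refine EReal.ge_of_forall_gt_iff_ge.1 fun c hc => ?_
  obtain ⟨X', hX'⟩ := exists_le_iInf_halfSpace_of_lt (hqc c) (hlsc c) hc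
  exact hX'.trans (le_iSup (fun X' : L →L[ℝ] ℝ => ⨅ ξ ∈ {ξ : L | X' X ≤ X' ξ}, f ξ) X')
end

section
/- Let π : L∞(F) → L∞(G) be regular with π(0) = 0, let ξ' ≥ 0 be in L¹(F) with dμ/dP = ξ', and define R(Y, ξ') := ess inf { π(ξ) : ξ ∈ L∞(F), E[ξ'ξ | G] ≥_μ Y }. Then for every A ∈ G, X ∈ L∞(F) and Y = E[Xξ' | G] (μ-a.s.), one has R(Y, ξ')·1_A = ess inf { π(ξ)·1_A : ξ ∈ L∞(F), E[ξ'ξ·1_A | G] ≥_μ Y·1_A }. -/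
/-!
Pasting is the whole argument. Any `ξ` admissible for the constraint localized to `A` becomes
admissible for the global constraint once it is replaced by `X` on `Aᶜ`, because there
`E[ξ'X | G] = Y`; by regularity `π` of the pasted variable is `π ξ` on `A`, so `R ≤ π ξ` on `A`.
Conversely every globally admissible `ξ` is admissible for the localized constraint, and a lower
bound `g` of the localized family satisfies `g ≤ π X · 1_A`, hence `g ≤ 0` off `A`.
-/

open MeasureTheory Filter Set

noncomputable section

/-- `X` is a bounded `F`-measurable random variable (an element of `L∞(F)`). -/
def IsBddMeas {Ω : Type*} (F : MeasurableSpace Ω) (X : Ω → ℝ) : Prop :=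
  Measurable[F] X ∧ ∃ C : ℝ, ∀ ω, |X ω| ≤ C

/-- Regularity (REG) of the conditional map `π` with respect to the
sub-σ-algebra `m`: `π (X 1_A + Y 1_{Aᶜ}) = π X 1_A + π Y 1_{Aᶜ}` a.s. -/
def Regular {Ω : Type*} (F m : MeasurableSpace Ω) (μ : @Measure Ω F)
    (π : (Ω → ℝ) → Ω → ℝ) : Prop :=
  ∀ X Y : Ω → ℝ, IsBddMeas F X → IsBddMeas F Y → ∀ A : Set Ω, MeasurableSet[m] A →
    π (A.indicator X + Aᶜ.indicator Y) =ᵐ[μ] A.indicator (π X) + Aᶜ.indicator (π Y)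

/-- `I` is an essential infimum (in the `μ`-a.e. pointwise order) of the set
`S` of random variables. -/
def IsEssInf {Ω : Type*} {F : MeasurableSpace Ω} (μ : @Measure Ω F)
    (S : Set (Ω → ℝ)) (I : Ω → ℝ) : Prop :=
  (∀ f ∈ S, I ≤ᵐ[μ] f) ∧ ∀ g : Ω → ℝ, (∀ f ∈ S, g ≤ᵐ[μ] f) → g ≤ᵐ[μ] I

/-- `I` is an essential supremum (in the `μ`-a.e. pointwise order) of the set
`S` of random variables. -/
def IsEssSup {Ω : Type*} {F : MeasurableSpace Ω} (μ : @Measure Ω F)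
    (S : Set (Ω → ℝ)) (I : Ω → ℝ) : Prop :=
  (∀ f ∈ S, f ≤ᵐ[μ] I) ∧ ∀ g : Ω → ℝ, (∀ f ∈ S, f ≤ᵐ[μ] g) → I ≤ᵐ[μ] g

section EssInf

variable {Ω : Type*} {mΩ : MeasurableSpace Ω} {μ : Measure Ω}

theorem isEssInf_indicator_of_paste {π : (Ω → ℝ) → Ω → ℝ} {A : Set Ω} [DecidablePred (· ∈ A)]
    {P PA : (Ω → ℝ) → Prop} {X R : Ω → ℝ}
    (hR : IsEssInf μ {g | ∃ ξ, P ξ ∧ g = π ξ} R)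
    (hPA : ∀ ξ, P ξ → PA ξ) (hX : PA X)
    (hpaste : ∀ ξ, PA ξ → ∃ η, P η ∧ π η =ᵐ[μ] A.piecewise (π ξ) (π X)) :
    IsEssInf μ {g | ∃ ξ, PA ξ ∧ g = A.indicator (π ξ)} (A.indicator R) := by
  constructor
  · rintro _ ⟨ξ, hξ, rfl⟩
    obtain ⟨η, hη, hπη⟩ := hpaste ξ hξ
    filter_upwards [hR.1 _ ⟨η, hη, rfl⟩, hπη] with ω hle heq
    by_cases hω : ω ∈ A <;> simp_all
  · intro g hg
    have hgX : g ≤ᵐ[μ] A.indicator (π X) := hg _ ⟨X, hX, rfl⟩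
    have hpasted : A.piecewise g R ≤ᵐ[μ] R := by
      refine hR.2 _ ?_
      rintro _ ⟨ξ, hξ, rfl⟩
      filter_upwards [hg _ ⟨ξ, hPA ξ hξ, rfl⟩, hR.1 _ ⟨ξ, hξ, rfl⟩] with ω hgξ hRξ
      by_cases hω : ω ∈ A <;> simp_all
    filter_upwards [hgX, hpasted] with ω hgXω hgR
    by_cases hω : ω ∈ A <;> simp_all

end EssInf

section Pasting

variable {Ω : Type*} {F m : MeasurableSpace Ω} {μ : Measure[F] Ω} {A : Set Ω} {f ξ X : Ω → ℝ}

theorem IsBddMeas.integrable_mul (hξ : IsBddMeas F ξ) (hf : Integrable f μ) :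
    Integrable (fun ω => f ω * ξ ω) μ := by
  obtain ⟨C, hC⟩ := hξ.2
  exact hf.mul_bdd hξ.1.aestronglyMeasurable (ae_of_all _ hC)

theorem condExp_mul_indicator (hfξ : Integrable (fun ω => f ω * ξ ω) μ)
    (hA : MeasurableSet[m] A) :
    μ[fun ω => f ω * A.indicator ξ ω | m] =ᵐ[μ] A.indicator (μ[fun ω => f ω * ξ ω | m]) := by
  have hmul : (fun ω => f ω * A.indicator ξ ω) = A.indicator (fun ω => f ω * ξ ω) :=
    funext fun ω => (indicator_mul_right A f ξ).symm
  exact hmul ▸ condExp_indicator hfξ hA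

variable [DecidablePred (· ∈ A)]

theorem IsBddMeas.piecewise (hξ : IsBddMeas F ξ) (hX : IsBddMeas F X) (hA : MeasurableSet[F] A) :
    IsBddMeas F (A.piecewise ξ X) := by
  obtain ⟨C, hC⟩ := hξ.2
  obtain ⟨D, hD⟩ := hX.2
  refine ⟨hξ.1.piecewise hA hX.1, max C D, fun ω => ?_⟩
  by_cases hω : ω ∈ A
  · simpa [hω] using (hC ω).trans (le_max_left C D)
  · simpa [hω] using (hD ω).trans (le_max_right C D)

theorem Regular.piecewise {π : (Ω → ℝ) → Ω → ℝ} (hreg : Regular F m μ π)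
    (hξ : IsBddMeas F ξ) (hX : IsBddMeas F X) (hA : MeasurableSet[m] A) :
    π (A.piecewise ξ X) =ᵐ[μ] A.piecewise (π ξ) (π X) := by
  simpa only [indicator_add_compl_eq_piecewise] using hreg ξ X hξ hX A hA

theorem condExp_mul_piecewise (hm : m ≤ F) (hfξ : Integrable (fun ω => f ω * ξ ω) μ)
    (hfX : Integrable (fun ω => f ω * X ω) μ) (hA : MeasurableSet[m] A) :
    μ[fun ω => f ω * A.piecewise ξ X ω | m]
      =ᵐ[μ] A.piecewise (μ[fun ω => f ω * ξ ω | m]) (μ[fun ω => f ω * X ω | m]) := by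
  have hsplit : (fun ω => f ω * A.piecewise ξ X ω)
      = A.indicator (fun ω => f ω * ξ ω) + Aᶜ.indicator (fun ω => f ω * X ω) := by
    rw [indicator_add_compl_eq_piecewise]
    funext ω
    by_cases hω : ω ∈ A <;> simp [hω]
  rw [hsplit, ← indicator_add_compl_eq_piecewise]
  exact (condExp_add (hfξ.indicator (hm _ hA)) (hfX.indicator (hm _ hA.compl)) m).trans
    ((condExp_indicator hfξ hA).add (condExp_indicator hfX hA.compl))

end Pasting

theorem R_localization_general
    {Ω : Type*} [F : MeasurableSpace Ω] (μ : Measure Ω)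
    (m : MeasurableSpace Ω) (hm : m ≤ F)
    (π : (Ω → ℝ) → Ω → ℝ) (hreg : Regular F m μ π)
    (ξ' : Ω → ℝ) (hξ'int : Integrable ξ' μ)
    (X : Ω → ℝ) (hX : IsBddMeas F X)
    (A : Set Ω) (hA : MeasurableSet[m] A)
    (Y : Ω → ℝ)
    (hYdef : Y =ᵐ[μ.withDensity fun ω => ENNReal.ofReal (ξ' ω)]
      μ[fun ω => X ω * ξ' ω|m])
    (R : Ω → ℝ)
    (hR : IsEssInf μ
      {g | ∃ ξ : Ω → ℝ, IsBddMeas F ξ ∧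
        (Y ≤ᵐ[μ.withDensity fun ω => ENNReal.ofReal (ξ' ω)]
          μ[fun ω => ξ' ω * ξ ω|m]) ∧ g = π ξ} R) :
    IsEssInf μ
      {g | ∃ ξ : Ω → ℝ, IsBddMeas F ξ ∧
        (A.indicator Y ≤ᵐ[μ.withDensity fun ω => ENNReal.ofReal (ξ' ω)]
          μ[fun ω => ξ' ω * A.indicator ξ ω|m]) ∧ g = A.indicator (π ξ)}
      (A.indicator R) := by
  classical
  set μ' := μ.withDensity fun ω => ENNReal.ofReal (ξ' ω)
  have hae {f g : Ω → ℝ} (h : f =ᵐ[μ] g) : f =ᵐ[μ'] g :=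
    (withDensity_absolutelyContinuous μ _).ae_eq h
  have hint {ξ : Ω → ℝ} (hξ : IsBddMeas F ξ) : Integrable (fun ω => ξ' ω * ξ ω) μ :=
    hξ.integrable_mul hξ'int
  have hYX : Y ≤ᵐ[μ'] μ[fun ω => ξ' ω * X ω|m] := by
    simpa only [mul_comm (X _)] using hYdef.le
  have hlocal (ξ : Ω → ℝ) (hξ : IsBddMeas F ξ ∧ Y ≤ᵐ[μ'] μ[fun ω => ξ' ω * ξ ω|m]) :
      IsBddMeas F ξ ∧ A.indicator Y ≤ᵐ[μ'] μ[fun ω => ξ' ω * A.indicator ξ ω|m] := by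
    refine ⟨hξ.1, ?_⟩
    filter_upwards [hξ.2, hae (condExp_mul_indicator (hint hξ.1) hA)] with ω hω heq
    exact heq ▸ indicator_le_indicator hω
  have hpaste (ξ : Ω → ℝ)
      (hξ : IsBddMeas F ξ ∧ A.indicator Y ≤ᵐ[μ'] μ[fun ω => ξ' ω * A.indicator ξ ω|m]) :
      ∃ η, (IsBddMeas F η ∧ Y ≤ᵐ[μ'] μ[fun ω => ξ' ω * η ω|m]) ∧
        π η =ᵐ[μ] A.piecewise (π ξ) (π X) := by
    obtain ⟨hξ, hK⟩ := hξ
    refine ⟨A.piecewise ξ X, ⟨hξ.piecewise hX (hm _ hA), ?_⟩, hreg.piecewise hξ hX hA⟩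
    filter_upwards [hK, hYX, hae (condExp_mul_piecewise hm (hint hξ) (hint hX) hA),
      hae (condExp_mul_indicator (hint hξ) hA)] with ω hKω hXω hpw hind
    by_cases hω : ω ∈ A <;> simp_all
  simpa only [and_assoc] using isEssInf_indicator_of_paste (by simpa only [and_assoc] using hR)
    hlocal (hlocal X ⟨hX, hYX⟩) hpaste

/-- Localization of `R(Y, ξ')` on a `G`-measurable set `A`: with
`R(Y,ξ') = ess inf {π ξ : E[ξ'ξ|G] ≥_μ' Y}` and `Y = E[Xξ'|G]` μ'-a.s., one has
`R(Y,ξ')·1_A = ess inf {π(ξ)·1_A : E[ξ'ξ1_A|G] ≥_μ' Y·1_A}`. -/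
theorem R_localization
    {Ω : Type*} [F : MeasurableSpace Ω] (μ : Measure Ω) [IsProbabilityMeasure μ]
    (m : MeasurableSpace Ω) (hm : m ≤ F)
    (π : (Ω → ℝ) → Ω → ℝ) (hreg : Regular F m μ π)
    (hπ0 : π 0 =ᵐ[μ] 0)
    (ξ' : Ω → ℝ) (hξ'pos : 0 ≤ ξ') (hξ'int : Integrable ξ' μ)
    (X : Ω → ℝ) (hX : IsBddMeas F X)
    (A : Set Ω) (hA : MeasurableSet[m] A)
    (Y : Ω → ℝ)
    (hYdef : Y =ᵐ[μ.withDensity fun ω => ENNReal.ofReal (ξ' ω)]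
      μ[fun ω => X ω * ξ' ω|m])
    (R : Ω → ℝ)
    (hR : IsEssInf μ
      {g | ∃ ξ : Ω → ℝ, IsBddMeas F ξ ∧
        (Y ≤ᵐ[μ.withDensity fun ω => ENNReal.ofReal (ξ' ω)]
          μ[fun ω => ξ' ω * ξ ω|m]) ∧ g = π ξ} R) :
    IsEssInf μ
      {g | ∃ ξ : Ω → ℝ, IsBddMeas F ξ ∧
        (A.indicator Y ≤ᵐ[μ.withDensity fun ω => ENNReal.ofReal (ξ' ω)]
          μ[fun ω => ξ' ω * A.indicator ξ ω|m]) ∧ g = A.indicator (π ξ)}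
      (A.indicator R) :=
  R_localization_general (F := F) μ m hm π hreg ξ' hξ'int X hX A hA Y hYdef R hR
end
end

section
/- Let π : L∞(F) → L∞(G) be regular with π(0) = 0 and let ξ' ≥ 0 in L¹(F). Define R(Y, ξ') := ess inf { π(ξ) : ξ ∈ L∞(F), E[ξ'ξ | G] ≥_μ Y } for Y ∈ L∞(G), where dμ/dP = ξ'. Then for all Y₁, Y₂ ∈ L∞(G) of the form Y_i = E[X_i ξ' | G]: (a) R(Y₁, ξ') ∧ R(Y₂, ξ') = R(Y₁ ∧ Y₂, ξ'), and (b) R(Y₁, ξ') ∨ R(Y₂, ξ') = R(Y₁ ∨ Y₂, ξ'). -/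
/-!
Let `A = {Y₁ ≤ Y₂}`, a `G`-measurable set on which `Y₁ ∧ Y₂ = Y₁` and `Y₁ ∨ Y₂ = Y₂`, with the
roles exchanged off `A`. Monotonicity of `R(·, ξ')` gives `R(Y₁ ∧ Y₂) ≤ R(Y₁) ∧ R(Y₂)` and
`R(Y₁) ∨ R(Y₂) ≤ R(Y₁ ∨ Y₂)`. Conversely `R` is local on `G`-measurable sets: since `π` is regular,
an admissible `ξ` can be replaced off a set by anything admissible there, e.g. by `Xᵢ`, which
satisfies `E[ξ' Xᵢ | G] = Yᵢ`. Hence `Y ≤ Z` on `A` forces `R(Y) ≤ R(Z)` on `A`, which yields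
the reverse inequalities separately on `A` and on its complement.
-/

open MeasureTheory Filter Set

noncomputable section

lemma IsBddMeas.indicator_add_indicator_compl {Ω : Type*} {F : MeasurableSpace Ω}
    {X Y : Ω → ℝ} {A : Set Ω} (hX : IsBddMeas F X) (hY : IsBddMeas F Y)
    (hA : MeasurableSet[F] A) : IsBddMeas F (A.indicator X + Aᶜ.indicator Y) := by
  obtain ⟨hXm, C, hC⟩ := hX
  obtain ⟨hYm, D, hD⟩ := hY
  refine ⟨(hXm.indicator hA).add (hYm.indicator hA.compl), max C D, fun ω => ?_⟩
  by_cases hω : ω ∈ A <;> simp [hω, hC ω, hD ω]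

lemma IsBddMeas.integrable_mul_s5 {Ω : Type*} {F : MeasurableSpace Ω} {μ : @Measure Ω F}
    {ξ' X : Ω → ℝ} (hX : IsBddMeas F X) (hξ' : Integrable ξ' μ) :
    Integrable (fun ω => ξ' ω * X ω) μ := by
  obtain ⟨hXm, C, hC⟩ := hX
  exact hξ'.mul_bdd hXm.aestronglyMeasurable (Eventually.of_forall hC)

lemma condExp_indicator_add_indicator_compl {Ω : Type*} {F : MeasurableSpace Ω}
    {μ : @Measure Ω F} {m : MeasurableSpace Ω} (hm : m ≤ F) {f g : Ω → ℝ} {A : Set Ω}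
    (hf : Integrable f μ) (hg : Integrable g μ) (hA : MeasurableSet[m] A) :
    μ[A.indicator f + Aᶜ.indicator g|m] =ᵐ[μ] A.indicator (μ[f|m]) + Aᶜ.indicator (μ[g|m]) :=
  (condExp_add (hf.indicator (hm _ hA)) (hg.indicator (hm _ hA.compl)) m).trans
    ((condExp_indicator hf hA).add (condExp_indicator hg hA.compl))

/-- The set whose essential infimum is `R(Y, ξ')`. -/
def dominatingValues {Ω : Type*} {F : MeasurableSpace Ω} (μ : @Measure Ω F)
    (m : MeasurableSpace Ω) (π : (Ω → ℝ) → Ω → ℝ) (ξ' Y : Ω → ℝ) : Set (Ω → ℝ) :=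
  {g | ∃ ξ : Ω → ℝ, IsBddMeas F ξ ∧
    (Y ≤ᵐ[μ.withDensity fun ω => ENNReal.ofReal (ξ' ω)] μ[fun ω => ξ' ω * ξ ω|m]) ∧ g = π ξ}

section DominatingValues

variable {Ω : Type*} {F : MeasurableSpace Ω} {μ : @Measure Ω F} {m : MeasurableSpace Ω}
  {π : (Ω → ℝ) → Ω → ℝ} {ξ' : Ω → ℝ}

lemma dominatingValues_anti {Y Z : Ω → ℝ}
    (hYZ : Y ≤ᵐ[μ.withDensity fun ω => ENNReal.ofReal (ξ' ω)] Z) :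
    dominatingValues μ m π ξ' Z ⊆ dominatingValues μ m π ξ' Y := by
  rintro _ ⟨ξ, hξ, hZξ, rfl⟩
  exact ⟨ξ, hξ, hYZ.trans hZξ, rfl⟩

lemma IsEssInf.ae_le_of_subset {S T : Set (Ω → ℝ)} {I J : Ω → ℝ} (hST : S ⊆ T)
    (hT : IsEssInf μ T J) (hS : IsEssInf μ S I) : J ≤ᵐ[μ] I :=
  hS.2 J fun f hf => hT.1 f (hST hf)

lemma exists_mem_dominatingValues_glue (hm : m ≤ F) (hreg : Regular F m μ π)
    (hξ' : Integrable ξ' μ) {A : Set Ω} (hA : MeasurableSet[m] A) {ξa ξb Z : Ω → ℝ}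
    (ha : IsBddMeas F ξa) (hb : IsBddMeas F ξb)
    (hZa : ∀ᵐ ω ∂μ.withDensity fun ω => ENNReal.ofReal (ξ' ω),
      ω ∈ A → Z ω ≤ μ[fun ω => ξ' ω * ξa ω|m] ω)
    (hZb : ∀ᵐ ω ∂μ.withDensity fun ω => ENNReal.ofReal (ξ' ω),
      ω ∉ A → Z ω ≤ μ[fun ω => ξ' ω * ξb ω|m] ω) :
    ∃ g ∈ dominatingValues μ m π ξ' Z, g =ᵐ[μ] A.indicator (π ξa) + Aᶜ.indicator (π ξb) := by
  have hmul : (fun ω => ξ' ω * (A.indicator ξa + Aᶜ.indicator ξb) ω)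
      = A.indicator (fun ω => ξ' ω * ξa ω) + Aᶜ.indicator (fun ω => ξ' ω * ξb ω) := by
    funext ω
    by_cases hω : ω ∈ A <;> simp [hω]
  have hce := condExp_indicator_add_indicator_compl hm (ha.integrable_mul_s5 hξ')
    (hb.integrable_mul_s5 hξ') hA
  rw [← hmul] at hce
  refine ⟨_, ⟨_, ha.indicator_add_indicator_compl hb (hm _ hA), ?_, rfl⟩, hreg _ _ ha hb A hA⟩
  filter_upwards [hZa, hZb, (withDensity_absolutelyContinuous μ _).ae_le hce]
    with ω hωa hωb hω
  rw [hω]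
  by_cases hωA : ω ∈ A
  · simpa [hωA] using hωa hωA
  · simpa [hωA] using hωb hωA

/-- Localization of `R(·, ξ')`: gluing any `ξ` admissible for `Z` on `A` with `ξ₀` off `A` gives
an element admissible for `Y` whose value is `π ξ` on `A`, by regularity of `π`. -/
lemma IsEssInf.ae_le_on_of_ae_le_on (hm : m ≤ F) (hreg : Regular F m μ π)
    (hξ' : Integrable ξ' μ) {A : Set Ω} (hA : MeasurableSet[m] A) {Y Z RY RZ : Ω → ℝ}
    (hRY : IsEssInf μ (dominatingValues μ m π ξ' Y) RY)
    (hRZ : IsEssInf μ (dominatingValues μ m π ξ' Z) RZ)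
    (hYZ : ∀ᵐ ω ∂μ.withDensity fun ω => ENNReal.ofReal (ξ' ω), ω ∈ A → Y ω ≤ Z ω)
    {ξ₀ : Ω → ℝ} (hξ₀ : IsBddMeas F ξ₀)
    (hYξ₀ : ∀ᵐ ω ∂μ.withDensity fun ω => ENNReal.ofReal (ξ' ω),
      ω ∉ A → Y ω ≤ μ[fun ω => ξ' ω * ξ₀ ω|m] ω) :
    ∀ᵐ ω ∂μ, ω ∈ A → RY ω ≤ RZ ω := by
  classical
  have hglue : A.piecewise RY RZ ≤ᵐ[μ] RZ := by
    refine hRZ.2 _ ?_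
    rintro _ ⟨ξ, hξ, hZξ, rfl⟩
    obtain ⟨g, hg, hgξ⟩ := exists_mem_dominatingValues_glue hm hreg hξ' hA hξ hξ₀
      (by filter_upwards [hYZ, hZξ] with ω h₁ h₂ hω using (h₁ hω).trans h₂) hYξ₀
    filter_upwards [hRY.1 g hg, hgξ, hRZ.1 _ ⟨ξ, hξ, hZξ, rfl⟩] with ω hRYg hgω hRZω
    by_cases hω : ω ∈ A
    · simpa [hω, hgω] using hRYg
    · simpa [hω] using hRZω
  filter_upwards [hglue] with ω h hω
  simpa [hω] using h

variable {X₁ X₂ Y₁ Y₂ R₁ R₂ : Ω → ℝ}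

lemma IsEssInf.min_ae_eq (hm : m ≤ F) (hreg : Regular F m μ π) (hξ' : Integrable ξ' μ)
    (hX₁ : IsBddMeas F X₁) (hX₂ : IsBddMeas F X₂)
    (hY₁m : Measurable[m] Y₁) (hY₂m : Measurable[m] Y₂)
    (hY₁X₁ : Y₁ ≤ᵐ[μ.withDensity fun ω => ENNReal.ofReal (ξ' ω)] μ[fun ω => ξ' ω * X₁ ω|m])
    (hY₂X₂ : Y₂ ≤ᵐ[μ.withDensity fun ω => ENNReal.ofReal (ξ' ω)] μ[fun ω => ξ' ω * X₂ ω|m])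
    (hR₁ : IsEssInf μ (dominatingValues μ m π ξ' Y₁) R₁)
    (hR₂ : IsEssInf μ (dominatingValues μ m π ξ' Y₂) R₂) {Rmin : Ω → ℝ}
    (hRmin : IsEssInf μ (dominatingValues μ m π ξ' fun ω => min (Y₁ ω) (Y₂ ω)) Rmin) :
    (fun ω => min (R₁ ω) (R₂ ω)) =ᵐ[μ] Rmin := by
  have hA : MeasurableSet[m] {ω | Y₁ ω ≤ Y₂ ω} := measurableSet_le hY₁m hY₂m
  have hRminR₁ : Rmin ≤ᵐ[μ] R₁ :=
    hRmin.ae_le_of_subset (dominatingValues_anti (ae_of_all _ fun _ => min_le_left _ _)) hR₁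
  have hRminR₂ : Rmin ≤ᵐ[μ] R₂ :=
    hRmin.ae_le_of_subset (dominatingValues_anti (ae_of_all _ fun _ => min_le_right _ _)) hR₂
  have hR₁Rmin : ∀ᵐ ω ∂μ, Y₁ ω ≤ Y₂ ω → R₁ ω ≤ Rmin ω :=
    hR₁.ae_le_on_of_ae_le_on hm hreg hξ' hA hRmin
      (ae_of_all _ fun _ hω => le_min le_rfl hω) hX₁ (hY₁X₁.mono fun _ h _ => h)
  have hR₂Rmin : ∀ᵐ ω ∂μ, ¬Y₁ ω ≤ Y₂ ω → R₂ ω ≤ Rmin ω :=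
    hR₂.ae_le_on_of_ae_le_on hm hreg hξ' hA.compl hRmin
      (ae_of_all _ fun _ (hω : ¬_) => le_min (not_le.mp hω).le le_rfl) hX₂
      (hY₂X₂.mono fun _ h _ => h)
  filter_upwards [hRminR₁, hRminR₂, hR₁Rmin, hR₂Rmin] with ω h₁ h₂ hA₁ hA₂
  refine le_antisymm ?_ (le_min h₁ h₂)
  by_cases hω : Y₁ ω ≤ Y₂ ω
  · exact (min_le_left _ _).trans (hA₁ hω)
  · exact (min_le_right _ _).trans (hA₂ hω)

lemma IsEssInf.max_ae_eq (hm : m ≤ F) (hreg : Regular F m μ π) (hξ' : Integrable ξ' μ)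
    (hX₁ : IsBddMeas F X₁) (hX₂ : IsBddMeas F X₂)
    (hY₁m : Measurable[m] Y₁) (hY₂m : Measurable[m] Y₂)
    (hY₁X₁ : Y₁ ≤ᵐ[μ.withDensity fun ω => ENNReal.ofReal (ξ' ω)] μ[fun ω => ξ' ω * X₁ ω|m])
    (hY₂X₂ : Y₂ ≤ᵐ[μ.withDensity fun ω => ENNReal.ofReal (ξ' ω)] μ[fun ω => ξ' ω * X₂ ω|m])
    (hR₁ : IsEssInf μ (dominatingValues μ m π ξ' Y₁) R₁)
    (hR₂ : IsEssInf μ (dominatingValues μ m π ξ' Y₂) R₂) {Rmax : Ω → ℝ}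
    (hRmax : IsEssInf μ (dominatingValues μ m π ξ' fun ω => max (Y₁ ω) (Y₂ ω)) Rmax) :
    (fun ω => max (R₁ ω) (R₂ ω)) =ᵐ[μ] Rmax := by
  have hA : MeasurableSet[m] {ω | Y₁ ω ≤ Y₂ ω} := measurableSet_le hY₁m hY₂m
  have hR₁Rmax : R₁ ≤ᵐ[μ] Rmax :=
    hR₁.ae_le_of_subset (dominatingValues_anti (ae_of_all _ fun _ => le_max_left _ _)) hRmax
  have hR₂Rmax : R₂ ≤ᵐ[μ] Rmax :=
    hR₂.ae_le_of_subset (dominatingValues_anti (ae_of_all _ fun _ => le_max_right _ _)) hRmax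
  have hRmaxR₂ : ∀ᵐ ω ∂μ, Y₁ ω ≤ Y₂ ω → Rmax ω ≤ R₂ ω :=
    hRmax.ae_le_on_of_ae_le_on hm hreg hξ' hA hR₂
      (ae_of_all _ fun _ hω => max_le hω le_rfl) hX₁
      (hY₁X₁.mono fun _ h (hω : ¬_) => (max_eq_left (not_le.mp hω).le).trans_le h)
  have hRmaxR₁ : ∀ᵐ ω ∂μ, ¬Y₁ ω ≤ Y₂ ω → Rmax ω ≤ R₁ ω :=
    hRmax.ae_le_on_of_ae_le_on hm hreg hξ' hA.compl hR₁
      (ae_of_all _ fun _ (hω : ¬_) => max_le le_rfl (not_le.mp hω).le) hX₂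
      (hY₂X₂.mono fun _ h (hω : ¬¬_) => (max_eq_right (not_not.mp hω)).trans_le h)
  filter_upwards [hR₁Rmax, hR₂Rmax, hRmaxR₂, hRmaxR₁] with ω h₁ h₂ hA₂ hA₁
  refine le_antisymm (max_le h₁ h₂) ?_
  by_cases hω : Y₁ ω ≤ Y₂ ω
  · exact (hA₂ hω).trans (le_max_right _ _)
  · exact (hA₁ hω).trans (le_max_left _ _)

end DominatingValues

theorem R_lattice_identities_general
    {Ω : Type*} [F : MeasurableSpace Ω] (μ : Measure Ω)
    (m : MeasurableSpace Ω) (hm : m ≤ F)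
    (π : (Ω → ℝ) → Ω → ℝ) (hreg : Regular F m μ π)
    (ξ' : Ω → ℝ) (hξ'int : Integrable ξ' μ)
    (X₁ X₂ : Ω → ℝ) (hX₁ : IsBddMeas F X₁) (hX₂ : IsBddMeas F X₂)
    (Y₁ Y₂ : Ω → ℝ) (hY₁m : Measurable[m] Y₁) (hY₂m : Measurable[m] Y₂)
    (hY₁ : Y₁ =ᵐ[μ.withDensity fun ω => ENNReal.ofReal (ξ' ω)]
      μ[fun ω => X₁ ω * ξ' ω|m])
    (hY₂ : Y₂ =ᵐ[μ.withDensity fun ω => ENNReal.ofReal (ξ' ω)]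
      μ[fun ω => X₂ ω * ξ' ω|m])
    (R₁ R₂ Rmin Rmax : Ω → ℝ)
    (hR₁ : IsEssInf μ
      {g | ∃ ξ : Ω → ℝ, IsBddMeas F ξ ∧
        (Y₁ ≤ᵐ[μ.withDensity fun ω => ENNReal.ofReal (ξ' ω)]
          μ[fun ω => ξ' ω * ξ ω|m]) ∧ g = π ξ} R₁)
    (hR₂ : IsEssInf μ
      {g | ∃ ξ : Ω → ℝ, IsBddMeas F ξ ∧
        (Y₂ ≤ᵐ[μ.withDensity fun ω => ENNReal.ofReal (ξ' ω)]
          μ[fun ω => ξ' ω * ξ ω|m]) ∧ g = π ξ} R₂)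
    (hRmin : IsEssInf μ
      {g | ∃ ξ : Ω → ℝ, IsBddMeas F ξ ∧
        ((fun ω => min (Y₁ ω) (Y₂ ω)) ≤ᵐ[μ.withDensity fun ω => ENNReal.ofReal (ξ' ω)]
          μ[fun ω => ξ' ω * ξ ω|m]) ∧ g = π ξ} Rmin)
    (hRmax : IsEssInf μ
      {g | ∃ ξ : Ω → ℝ, IsBddMeas F ξ ∧
        ((fun ω => max (Y₁ ω) (Y₂ ω)) ≤ᵐ[μ.withDensity fun ω => ENNReal.ofReal (ξ' ω)]
          μ[fun ω => ξ' ω * ξ ω|m]) ∧ g = π ξ} Rmax) :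
    ((fun ω => min (R₁ ω) (R₂ ω)) =ᵐ[μ] Rmin) ∧
    ((fun ω => max (R₁ ω) (R₂ ω)) =ᵐ[μ] Rmax) := by
  have hcomm (X : Ω → ℝ) : (fun ω => X ω * ξ' ω) = fun ω => ξ' ω * X ω :=
    funext fun ω => mul_comm _ _
  rw [hcomm] at hY₁ hY₂
  exact ⟨hR₁.min_ae_eq hm hreg hξ'int hX₁ hX₂ hY₁m hY₂m hY₁.le hY₂.le hR₂ hRmin,
    hR₁.max_ae_eq hm hreg hξ'int hX₁ hX₂ hY₁m hY₂m hY₁.le hY₂.le hR₂ hRmax⟩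

/-- Lattice identities for `R(·, ξ')`:
`R(Y₁,ξ') ∧ R(Y₂,ξ') = R(Y₁ ∧ Y₂, ξ')` and
`R(Y₁,ξ') ∨ R(Y₂,ξ') = R(Y₁ ∨ Y₂, ξ')`, for `Yᵢ = E[Xᵢ ξ'|G]` μ'-a.s. -/
theorem R_lattice_identities
    {Ω : Type*} [F : MeasurableSpace Ω] (μ : Measure Ω) [IsProbabilityMeasure μ]
    (m : MeasurableSpace Ω) (hm : m ≤ F)
    (π : (Ω → ℝ) → Ω → ℝ) (hreg : Regular F m μ π)
    (hπ0 : π 0 =ᵐ[μ] 0)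
    (ξ' : Ω → ℝ) (hξ'pos : 0 ≤ ξ') (hξ'int : Integrable ξ' μ)
    (X₁ X₂ : Ω → ℝ) (hX₁ : IsBddMeas F X₁) (hX₂ : IsBddMeas F X₂)
    (Y₁ Y₂ : Ω → ℝ) (hY₁m : Measurable[m] Y₁) (hY₂m : Measurable[m] Y₂)
    (hY₁ : Y₁ =ᵐ[μ.withDensity fun ω => ENNReal.ofReal (ξ' ω)]
      μ[fun ω => X₁ ω * ξ' ω|m])
    (hY₂ : Y₂ =ᵐ[μ.withDensity fun ω => ENNReal.ofReal (ξ' ω)]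
      μ[fun ω => X₂ ω * ξ' ω|m])
    (R₁ R₂ Rmin Rmax : Ω → ℝ)
    (hR₁ : IsEssInf μ
      {g | ∃ ξ : Ω → ℝ, IsBddMeas F ξ ∧
        (Y₁ ≤ᵐ[μ.withDensity fun ω => ENNReal.ofReal (ξ' ω)]
          μ[fun ω => ξ' ω * ξ ω|m]) ∧ g = π ξ} R₁)
    (hR₂ : IsEssInf μ
      {g | ∃ ξ : Ω → ℝ, IsBddMeas F ξ ∧
        (Y₂ ≤ᵐ[μ.withDensity fun ω => ENNReal.ofReal (ξ' ω)]
          μ[fun ω => ξ' ω * ξ ω|m]) ∧ g = π ξ} R₂)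
    (hRmin : IsEssInf μ
      {g | ∃ ξ : Ω → ℝ, IsBddMeas F ξ ∧
        ((fun ω => min (Y₁ ω) (Y₂ ω)) ≤ᵐ[μ.withDensity fun ω => ENNReal.ofReal (ξ' ω)]
          μ[fun ω => ξ' ω * ξ ω|m]) ∧ g = π ξ} Rmin)
    (hRmax : IsEssInf μ
      {g | ∃ ξ : Ω → ℝ, IsBddMeas F ξ ∧
        ((fun ω => max (Y₁ ω) (Y₂ ω)) ≤ᵐ[μ.withDensity fun ω => ENNReal.ofReal (ξ' ω)]
          μ[fun ω => ξ' ω * ξ ω|m]) ∧ g = π ξ} Rmax) :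
    ((fun ω => min (R₁ ω) (R₂ ω)) =ᵐ[μ] Rmin) ∧
    ((fun ω => max (R₁ ω) (R₂ ω)) =ᵐ[μ] Rmax) :=
  R_lattice_identities_general (F := F) μ m hm π hreg ξ' hξ'int X₁ X₂ hX₁ hX₂ Y₁ Y₂ hY₁m hY₂m hY₁
    hY₂ R₁ R₂ Rmin Rmax hR₁ hR₂ hRmin hRmax
end
end

section
/- Let π : L∞(F) → L∞(G) be regular with π(0)=0 and K(X,Q) := ess inf { π(ξ) : E_Q[ξ|G] ≥_Q E_Q[X|G] }. If Q₁, Q₂ ≪ P and B ∈ G satisfy (dQ₁/dP)·1_B = (dQ₂/dP)·1_B, then K(X, Q₁)·1_B = K(X, Q₂)·1_B for every X ∈ L∞(F). -/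
/-!
Equal densities on `B ∈ G` make `Q₁` and `Q₂` agree on `B`, hence so do their
`G`-conditional expectations there. Pasting a `Q₁`-admissible `ξ` on `B` with `X` off `B`
therefore gives a `Q₂`-admissible variable, whose `π`-value is `π ξ` on `B` by
regularity. So `K(X, Q₂) ≤ K(X, Q₁)` on `B`, and the symmetric argument gives equality.
-/

open MeasureTheory Filter Set

noncomputable section

section

variable {Ω : Type*} {m F : MeasurableSpace Ω}

theorem IsBddMeas.integrable {X : Ω → ℝ} (hX : IsBddMeas F X) (Q : Measure Ω)
    [IsFiniteMeasure Q] : Integrable X Q := by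
  obtain ⟨hmeas, C, hC⟩ := hX
  exact Integrable.of_bound hmeas.aestronglyMeasurable C
    (ae_of_all _ fun ω => by simpa using hC ω)

theorem IsBddMeas.indicator_add_compl_indicator {X Y : Ω → ℝ} (hX : IsBddMeas F X)
    (hY : IsBddMeas F Y) {A : Set Ω} (hA : MeasurableSet A) :
    IsBddMeas F (A.indicator X + Aᶜ.indicator Y) := by
  obtain ⟨hXm, CX, hCX⟩ := hX
  obtain ⟨hYm, CY, hCY⟩ := hY
  refine ⟨(hXm.indicator hA).add (hYm.indicator hA.compl), max CX CY, fun ω => ?_⟩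
  by_cases hω : ω ∈ A
  · simpa [hω] using (hCX ω).trans (le_max_left _ _)
  · simpa [hω] using (hCY ω).trans (le_max_right _ _)

theorem MeasureTheory.Measure.restrict_eq_of_ae_eqOn_rnDeriv {μ Q₁ Q₂ : Measure Ω}
    [Q₁.HaveLebesgueDecomposition μ] [Q₂.HaveLebesgueDecomposition μ]
    (hQ₁ : Q₁ ≪ μ) (hQ₂ : Q₂ ≪ μ) {B : Set Ω} (hB : MeasurableSet B)
    (hdens : ∀ᵐ ω ∂μ, ω ∈ B → Q₁.rnDeriv μ ω = Q₂.rnDeriv μ ω) :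
    Q₁.restrict B = Q₂.restrict B := by
  rw [← Measure.withDensity_rnDeriv_eq Q₁ μ hQ₁, ← Measure.withDensity_rnDeriv_eq Q₂ μ hQ₂,
    restrict_withDensity hB, restrict_withDensity hB]
  exact withDensity_congr_ae ((ae_restrict_iff' hB).2 hdens)

theorem condExp_ae_eq_restrict_of_restrict_eq (hm : m ≤ F) {Q₁ Q₂ : Measure Ω}
    [IsFiniteMeasure Q₁] [IsFiniteMeasure Q₂] {B : Set Ω} (hB : MeasurableSet[m] B)
    (hQ : Q₁.restrict B = Q₂.restrict B) {f : Ω → ℝ} (hf₁ : Integrable f Q₁)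
    (hf₂ : Integrable f Q₂) :
    Q₁[f|m] =ᵐ[Q₂.restrict B] Q₂[f|m] := by
  have h₁ := condExp_restrict_ae_eq_restrict hm hB hf₁
  rw [hQ] at h₁
  exact h₁.symm.trans (condExp_restrict_ae_eq_restrict hm hB hf₂)

theorem condExp_indicator_add_compl_indicator (hm : m ≤ F) {Q : Measure Ω} {f g : Ω → ℝ}
    (hf : Integrable f Q) (hg : Integrable g Q) {A : Set Ω} (hA : MeasurableSet[m] A) :
    Q[A.indicator f + Aᶜ.indicator g|m] =ᵐ[Q] A.indicator (Q[f|m]) + Aᶜ.indicator (Q[g|m]) :=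
  (condExp_add (hf.indicator (hm A hA)) (hg.indicator (hm A hA).compl) m).trans
    ((condExp_indicator hf hA).add (condExp_indicator hg hA.compl))

theorem condExp_le_condExp_indicator_add_compl_indicator (hm : m ≤ F) {Q₁ Q₂ : Measure Ω}
    [IsFiniteMeasure Q₁] [IsFiniteMeasure Q₂] {B : Set Ω} (hB : MeasurableSet[m] B)
    (hQ : Q₁.restrict B = Q₂.restrict B) {X ξ : Ω → ℝ}
    (hX₁ : Integrable X Q₁) (hX₂ : Integrable X Q₂)
    (hξ₁ : Integrable ξ Q₁) (hξ₂ : Integrable ξ Q₂) (hadm : Q₁[X|m] ≤ᵐ[Q₁] Q₁[ξ|m]) :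
    Q₂[X|m] ≤ᵐ[Q₂] Q₂[B.indicator ξ + Bᶜ.indicator X|m] := by
  have hadm_B : Q₂[X|m] ≤ᵐ[Q₂.restrict B] Q₂[ξ|m] := by
    filter_upwards [hQ ▸ ae_restrict_of_ae hadm,
      condExp_ae_eq_restrict_of_restrict_eq hm hB hQ hX₁ hX₂,
      condExp_ae_eq_restrict_of_restrict_eq hm hB hQ hξ₁ hξ₂] with ω hω hXω hξω
    rwa [← hXω, ← hξω]
  filter_upwards [condExp_indicator_add_compl_indicator hm hξ₂ hX₂ hB,
    (ae_restrict_iff' (hm B hB)).1 hadm_B] with ω hpaste hω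
  by_cases hωB : ω ∈ B
  · simpa [hpaste, hωB] using hω hωB
  · simp [hpaste, hωB]

/-- Pasting `I₂` on `B` with `I₁` off `B` gives a lower bound of `S₁`. -/
theorem IsEssInf.ae_le_on_of_forall_exists {μ : Measure Ω} {S₁ S₂ : Set (Ω → ℝ)}
    {I₁ I₂ : Ω → ℝ} (h₁ : IsEssInf μ S₁ I₁) (h₂ : IsEssInf μ S₂ I₂) {B : Set Ω}
    (hS : ∀ f ∈ S₁, ∃ f' ∈ S₂, ∀ᵐ ω ∂μ, ω ∈ B → f' ω = f ω) :
    ∀ᵐ ω ∂μ, ω ∈ B → I₂ ω ≤ I₁ ω := by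
  have hlower : ∀ f ∈ S₁, B.indicator I₂ + Bᶜ.indicator I₁ ≤ᵐ[μ] f := by
    intro f hf
    obtain ⟨f', hf', hf'f⟩ := hS f hf
    filter_upwards [h₂.1 f' hf', hf'f, h₁.1 f hf] with ω h₂ω hf'ω h₁ω
    by_cases hωB : ω ∈ B
    · simpa [hωB, ← hf'ω hωB] using h₂ω
    · simpa [hωB] using h₁ω
  filter_upwards [h₁.2 _ hlower] with ω hω hωB
  simpa [hωB] using hω

/-- The set whose essential infimum is `K(X, Q)`. -/
def admissibleValues (m : MeasurableSpace Ω) (π : (Ω → ℝ) → Ω → ℝ) (Q : @Measure Ω F)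
    (X : Ω → ℝ) : Set (Ω → ℝ) :=
  {g | ∃ ξ : Ω → ℝ, IsBddMeas F ξ ∧ (Q[X|m] ≤ᵐ[Q] Q[ξ|m]) ∧ g = π ξ}

theorem exists_mem_admissibleValues_eqOn (hm : m ≤ F) {μ : Measure Ω}
    {π : (Ω → ℝ) → Ω → ℝ} (hreg : Regular F m μ π) {X : Ω → ℝ} (hX : IsBddMeas F X)
    {Q₁ Q₂ : Measure Ω} [IsFiniteMeasure Q₁] [IsFiniteMeasure Q₂] {B : Set Ω}
    (hB : MeasurableSet[m] B) (hQ : Q₁.restrict B = Q₂.restrict B) {f : Ω → ℝ}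
    (hf : f ∈ admissibleValues m π Q₁ X) :
    ∃ f' ∈ admissibleValues m π Q₂ X, ∀ᵐ ω ∂μ, ω ∈ B → f' ω = f ω := by
  obtain ⟨ξ, hξ, hadm, rfl⟩ := hf
  refine ⟨π (B.indicator ξ + Bᶜ.indicator X),
    ⟨_, hξ.indicator_add_compl_indicator hX (hm B hB),
      condExp_le_condExp_indicator_add_compl_indicator hm hB hQ (hX.integrable Q₁)
        (hX.integrable Q₂) (hξ.integrable Q₁) (hξ.integrable Q₂) hadm, rfl⟩, ?_⟩
  filter_upwards [hreg ξ X hξ hX B hB] with ω hω hωB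
  simp [hω, hωB]

end

theorem K_locality_general
    {Ω : Type*} [F : MeasurableSpace Ω] (μ : Measure Ω) [IsProbabilityMeasure μ]
    (m : MeasurableSpace Ω) (hm : m ≤ F)
    (π : (Ω → ℝ) → Ω → ℝ) (hreg : Regular F m μ π)
    (X : Ω → ℝ) (hX : IsBddMeas F X)
    (Q₁ Q₂ : @Measure Ω F) [IsProbabilityMeasure Q₁] [IsProbabilityMeasure Q₂]
    (hQ₁ : Q₁ ≪ μ) (hQ₂ : Q₂ ≪ μ)
    (B : Set Ω) (hB : MeasurableSet[m] B)
    (hdens : ∀ᵐ ω ∂μ, ω ∈ B → Q₁.rnDeriv μ ω = Q₂.rnDeriv μ ω)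
    (K₁ K₂ : Ω → ℝ)
    (hK₁ : IsEssInf μ
      {g | ∃ ξ : Ω → ℝ, IsBddMeas F ξ ∧ (Q₁[X|m] ≤ᵐ[Q₁] Q₁[ξ|m]) ∧ g = π ξ} K₁)
    (hK₂ : IsEssInf μ
      {g | ∃ ξ : Ω → ℝ, IsBddMeas F ξ ∧ (Q₂[X|m] ≤ᵐ[Q₂] Q₂[ξ|m]) ∧ g = π ξ} K₂) :
    ∀ᵐ ω ∂μ, ω ∈ B → K₁ ω = K₂ ω := by
  have hres : Q₁.restrict B = Q₂.restrict B :=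
    Measure.restrict_eq_of_ae_eqOn_rnDeriv hQ₁ hQ₂ (hm B hB) hdens
  have hK₂_le : ∀ᵐ ω ∂μ, ω ∈ B → K₂ ω ≤ K₁ ω :=
    hK₁.ae_le_on_of_forall_exists hK₂ fun _ hf ↦
      exists_mem_admissibleValues_eqOn hm hreg hX hB hres hf
  have hK₁_le : ∀ᵐ ω ∂μ, ω ∈ B → K₁ ω ≤ K₂ ω :=
    hK₂.ae_le_on_of_forall_exists hK₁ fun _ hf ↦
      exists_mem_admissibleValues_eqOn hm hreg hX hB hres.symm hf
  filter_upwards [hK₂_le, hK₁_le] with ω h₂₁ h₁₂ hω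
  exact le_antisymm (h₁₂ hω) (h₂₁ hω)

/-- Locality of `K(X, ·)` in the measure: if the densities `dQ₁/dP` and
`dQ₂/dP` agree on `B ∈ G`, then `K(X,Q₁)·1_B = K(X,Q₂)·1_B`. -/
theorem K_locality
    {Ω : Type*} [F : MeasurableSpace Ω] (μ : Measure Ω) [IsProbabilityMeasure μ]
    (m : MeasurableSpace Ω) (hm : m ≤ F)
    (π : (Ω → ℝ) → Ω → ℝ) (hreg : Regular F m μ π)
    (hπ0 : π 0 =ᵐ[μ] 0)
    (X : Ω → ℝ) (hX : IsBddMeas F X)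
    (Q₁ Q₂ : @Measure Ω F) [IsProbabilityMeasure Q₁] [IsProbabilityMeasure Q₂]
    (hQ₁ : Q₁ ≪ μ) (hQ₂ : Q₂ ≪ μ)
    (B : Set Ω) (hB : MeasurableSet[m] B)
    (hdens : ∀ᵐ ω ∂μ, ω ∈ B → Q₁.rnDeriv μ ω = Q₂.rnDeriv μ ω)
    (K₁ K₂ : Ω → ℝ)
    (hK₁ : IsEssInf μ
      {g | ∃ ξ : Ω → ℝ, IsBddMeas F ξ ∧ (Q₁[X|m] ≤ᵐ[Q₁] Q₁[ξ|m]) ∧ g = π ξ} K₁)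
    (hK₂ : IsEssInf μ
      {g | ∃ ξ : Ω → ℝ, IsBddMeas F ξ ∧ (Q₂[X|m] ≤ᵐ[Q₂] Q₂[ξ|m]) ∧ g = π ξ} K₂) :
    ∀ᵐ ω ∂μ, ω ∈ B → K₁ ω = K₂ ω :=
  K_locality_general (F := F) μ m hm π hreg X hX Q₁ Q₂ hQ₁ hQ₂ B hB hdens K₁ K₂ hK₁ hK₂
end
end

section
/- Let Q ≪ P be a probability measure with Q = P on G, suppose E_Q[ξ|G] ∈ L∞(F) for all ξ ∈ L∞(F), and let π : L∞(F) → L∞(G) be monotone increasing and regular. Then K(X,Q) := ess inf { π(ξ) : E_Q[ξ|G] ≥ E_Q[X|G] } equals ess inf { π(ξ) : E_Q[ξ|G] = E_Q[X|G] }, i.e. the inequality constraint may be replaced by an equality constraint. -/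
open MeasureTheory Filter Set

noncomputable section

/-!
Lowering an admissible `ξ` for the inequality constraint by the `G`-measurable
`Z := E_Q[ξ | G] - E_Q[X | G] ≥ 0` yields `ξ - Z`, which meets the equality constraint, and
`π (ξ - Z) ≤ π ξ` by monotonicity. Hence every element of the first set dominates an element of
the second, and the two essential infima coincide. Since `Z` is only `Q`-a.s. bounded, it is
clipped to a bounded interval, which changes it on a `Q`-null set only.
-/

namespace IsEssInf

variable {Ω : Type*} {mΩ : MeasurableSpace Ω} {μ : Measure Ω} {S T : Set (Ω → ℝ)} {I J : Ω → ℝ}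

theorem ae_le_of_subset_s9 (hS : IsEssInf μ S I) (hT : IsEssInf μ T J) (hTS : T ⊆ S) :
    I ≤ᵐ[μ] J :=
  hT.2 I fun f hf => hS.1 f (hTS hf)

theorem ae_le_of_forall_exists_le (hS : IsEssInf μ S I) (hT : IsEssInf μ T J)
    (h : ∀ f ∈ S, ∃ g ∈ T, g ≤ᵐ[μ] f) : J ≤ᵐ[μ] I :=
  hS.2 J fun f hf =>
    let ⟨g, hg, hgf⟩ := h f hf
    (hT.1 g hg).trans hgf

end IsEssInf

section BoundedMeasurable

variable {Ω : Type*} {m mΩ : MeasurableSpace Ω} {f g : Ω → ℝ}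

theorem IsBddMeas.sub (hf : IsBddMeas mΩ f) (hg : IsBddMeas mΩ g) : IsBddMeas mΩ (f - g) := by
  obtain ⟨hfm, Cf, hCf⟩ := hf
  obtain ⟨hgm, Cg, hCg⟩ := hg
  refine ⟨hfm.sub hgm, Cf + Cg, fun ω => ?_⟩
  calc |f ω - g ω| ≤ |f ω| + |g ω| := abs_sub _ _
    _ ≤ Cf + Cg := add_le_add (hCf ω) (hCg ω)

theorem IsBddMeas.integrable_s9 (hf : IsBddMeas mΩ f) (ν : Measure Ω) [IsFiniteMeasure ν] :
    Integrable f ν :=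
  let ⟨hfm, C, hC⟩ := hf
  .of_bound hfm.aestronglyMeasurable C (ae_of_all _ hC)

theorem IsBddMeas.exists_ae_abs_condExp_le (hf : IsBddMeas mΩ f) (ν : Measure Ω) :
    ∃ C : ℝ, ∀ᵐ ω ∂ν, |ν[f|m] ω| ≤ C :=
  let ⟨_, C, hC⟩ := hf
  ⟨C, ae_bdd_abs_condExp_of_ae_bdd_abs (ae_of_all _ hC)⟩

theorem exists_measurable_mem_Icc_ae_eq {ν : Measure Ω} {D : Ω → ℝ} (hD : Measurable[m] D)
    {C : ℝ} (hC : 0 ≤ C) (hDC : ∀ᵐ ω ∂ν, D ω ∈ Icc 0 C) :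
    ∃ Z : Ω → ℝ, Measurable[m] Z ∧ (∀ ω, Z ω ∈ Icc 0 C) ∧ Z =ᵐ[ν] D :=
  ⟨fun ω => projIcc 0 C hC (D ω),
    (continuous_subtype_val.comp continuous_projIcc).measurable.comp hD,
    fun ω => (projIcc 0 C hC (D ω)).2,
    hDC.mono fun _ hω => congrArg Subtype.val (projIcc_of_mem hC hω)⟩

theorem exists_isBddMeas_le_condExp_eq (hm : m ≤ mΩ) (Q : Measure Ω) [IsFiniteMeasure Q]
    {X ξ : Ω → ℝ} (hX : IsBddMeas mΩ X) (hξ : IsBddMeas mΩ ξ) (hXξ : Q[X|m] ≤ᵐ[Q] Q[ξ|m]) :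
    ∃ η : Ω → ℝ, IsBddMeas mΩ η ∧ η ≤ ξ ∧ Q[η|m] =ᵐ[Q] Q[X|m] := by
  obtain ⟨Cξ, hCξ⟩ := hξ.exists_ae_abs_condExp_le (m := m) Q
  obtain ⟨CX, hCX⟩ := hX.exists_ae_abs_condExp_le (m := m) Q
  have hD_mem : ∀ᵐ ω ∂Q, (Q[ξ|m] - Q[X|m]) ω ∈ Icc 0 (|Cξ| + |CX|) := by
    filter_upwards [hXξ, hCξ, hCX] with ω hle hξω hXω
    refine ⟨sub_nonneg.2 hle, ?_⟩
    calc (Q[ξ|m] - Q[X|m]) ω ≤ |Q[ξ|m] ω| + |Q[X|m] ω| := (le_abs_self _).trans (abs_sub _ _)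
      _ ≤ |Cξ| + |CX| := add_le_add (hξω.trans (le_abs_self _)) (hXω.trans (le_abs_self _))
  have hC : 0 ≤ |Cξ| + |CX| := by positivity
  obtain ⟨Z, hZm, hZ_mem, hZD⟩ := exists_measurable_mem_Icc_ae_eq
    (stronglyMeasurable_condExp.measurable.sub stronglyMeasurable_condExp.measurable) hC hD_mem
  have hZ : IsBddMeas mΩ Z :=
    ⟨hZm.mono hm le_rfl, |Cξ| + |CX|,
      fun ω => abs_le.2 ⟨(neg_nonpos.2 hC).trans (hZ_mem ω).1, (hZ_mem ω).2⟩⟩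
  refine ⟨ξ - Z, hξ.sub hZ, fun ω => sub_le_self _ (hZ_mem ω).1, ?_⟩
  have hZ_condExp : Q[Z|m] = Z := condExp_of_stronglyMeasurable hm hZm.stronglyMeasurable
    (hZ.integrable_s9 Q)
  filter_upwards [condExp_sub (hξ.integrable_s9 Q) (hZ.integrable_s9 Q) m, hZD] with ω hsub hZω
  rw [hsub, Pi.sub_apply, hZ_condExp, hZω, Pi.sub_apply, sub_sub_cancel]

end BoundedMeasurable

theorem K_equality_constraint_general
    {Ω : Type*} [F : MeasurableSpace Ω] (μ : Measure Ω)
    (m : MeasurableSpace Ω) (hm : m ≤ F)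
    (π : (Ω → ℝ) → Ω → ℝ)
    (hmono : ∀ X Y : Ω → ℝ, IsBddMeas F X → IsBddMeas F Y →
      X ≤ᵐ[μ] Y → π X ≤ᵐ[μ] π Y)
    (Q : @Measure Ω F) [IsProbabilityMeasure Q]
    (X : Ω → ℝ) (hX : IsBddMeas F X)
    (Kineq Keq : Ω → ℝ)
    (hKineq : IsEssInf μ
      {g | ∃ ξ : Ω → ℝ, IsBddMeas F ξ ∧ (Q[X|m] ≤ᵐ[Q] Q[ξ|m]) ∧ g = π ξ} Kineq)
    (hKeq : IsEssInf μ
      {g | ∃ ξ : Ω → ℝ, IsBddMeas F ξ ∧ (Q[ξ|m] =ᵐ[Q] Q[X|m]) ∧ g = π ξ} Keq) :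
    Kineq =ᵐ[μ] Keq := by
  refine (hKineq.ae_le_of_subset_s9 hKeq ?_).antisymm (hKineq.ae_le_of_forall_exists_le hKeq ?_)
  · rintro _ ⟨ξ, hξ, hξX, rfl⟩
    exact ⟨ξ, hξ, hξX.symm.le, rfl⟩
  · rintro _ ⟨ξ, hξ, hXξ, rfl⟩
    obtain ⟨η, hη, hηξ, hηX⟩ := exists_isBddMeas_le_condExp_eq hm Q hX hξ hXξ
    exact ⟨π η, ⟨η, hη, hηX, rfl⟩, hmono η ξ hη hξ (ae_of_all _ hηξ)⟩

/-- For monotone regular `π` and `Q ≪ P` with `Q = P` on `G` (and conditional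
expectations staying in `L∞`), the inequality constraint in `K(X,Q)` may be
replaced by an equality constraint. -/
theorem K_equality_constraint
    {Ω : Type*} [F : MeasurableSpace Ω] (μ : Measure Ω) [IsProbabilityMeasure μ]
    (m : MeasurableSpace Ω) (hm : m ≤ F)
    (π : (Ω → ℝ) → Ω → ℝ) (hreg : Regular F m μ π)
    (hmono : ∀ X Y : Ω → ℝ, IsBddMeas F X → IsBddMeas F Y →
      X ≤ᵐ[μ] Y → π X ≤ᵐ[μ] π Y)
    (Q : @Measure Ω F) [IsProbabilityMeasure Q] (hQ : Q ≪ μ)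
    (hQm : ∀ A : Set Ω, MeasurableSet[m] A → Q A = μ A)
    (hce : ∀ ξ : Ω → ℝ, IsBddMeas F ξ → ∃ C : ℝ, ∀ᵐ ω ∂μ, |(Q[ξ|m]) ω| ≤ C)
    (X : Ω → ℝ) (hX : IsBddMeas F X)
    (Kineq Keq : Ω → ℝ)
    (hKineq : IsEssInf μ
      {g | ∃ ξ : Ω → ℝ, IsBddMeas F ξ ∧ (Q[X|m] ≤ᵐ[Q] Q[ξ|m]) ∧ g = π ξ} Kineq)
    (hKeq : IsEssInf μ
      {g | ∃ ξ : Ω → ℝ, IsBddMeas F ξ ∧ (Q[ξ|m] =ᵐ[Q] Q[X|m]) ∧ g = π ξ} Keq) :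
    Kineq =ᵐ[μ] Keq :=
  K_equality_constraint_general (F := F) μ m hm π hmono Q X hX Kineq Keq hKineq hKeq
end
end

section
/- Let Q ≪ P with Q = P on G, E_Q[ξ|G] ∈ L∞(F) for all ξ ∈ L∞(F), and let π : L∞(F) → L∞(G) be monotone increasing, regular, and cash invariant (π(X + Λ) = π(X) + Λ for all G-measurable Λ ∈ L∞(G)). Then K(X, Q) = E_Q[X|G] − π*(Q), where π*(Q) := ess sup_{ξ ∈ L∞(F)} ( E_Q[ξ|G] − π(ξ) ) is the conditional Fenchel conjugate. -/
/-!
For feasible `ξ` (i.e. `E_Q[X|G] ≤ E_Q[ξ|G]`) one has `E_Q[X|G] - π*(Q) ≤ E_Q[ξ|G] - π*(Q) ≤ π(ξ)`,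
which gives `E_Q[X|G] - π*(Q) ≤ K(X,Q)`. Conversely, any bounded `ξ` is translated by the bounded
`G`-measurable `Λ = E_Q[X|G] - E_Q[ξ|G]` into the feasible `ξ + Λ` with `E_Q[ξ + Λ|G] = E_Q[X|G]`,
and cash invariance gives `K(X,Q) ≤ π(ξ + Λ) = π(ξ) + E_Q[X|G] - E_Q[ξ|G]`; taking the essential
supremum over `ξ` yields `K(X,Q) ≤ E_Q[X|G] - π*(Q)`.
-/

open MeasureTheory Filter Set

noncomputable section

namespace IsBddMeas

variable {Ω : Type*} {m F : MeasurableSpace Ω} {ξ η : Ω → ℝ}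

theorem mono (hm : m ≤ F) (hξ : IsBddMeas m ξ) : IsBddMeas F ξ :=
  ⟨hξ.1.mono hm le_rfl, hξ.2⟩

theorem add (hξ : IsBddMeas F ξ) (hη : IsBddMeas F η) : IsBddMeas F (ξ + η) := by
  obtain ⟨hξm, C, hC⟩ := hξ
  obtain ⟨hηm, D, hD⟩ := hη
  exact ⟨hξm.add hηm, C + D, fun ω => (abs_add_le _ _).trans (add_le_add (hC ω) (hD ω))⟩

theorem integrable_s10 {μ : Measure[F] Ω} [IsFiniteMeasure μ] (hξ : IsBddMeas F ξ) :
    Integrable ξ μ := by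
  obtain ⟨hξm, C, hC⟩ := hξ
  exact .of_bound hξm.aestronglyMeasurable C (ae_of_all _ hC)

theorem exists_ae_eq {μ : Measure[F] Ω} {f : Ω → ℝ} (hf : Measurable[m] f) {C : ℝ}
    (hC : ∀ᵐ ω ∂μ, |f ω| ≤ C) : ∃ g, IsBddMeas m g ∧ g =ᵐ[μ] f := by
  set A := {ω | |f ω| ≤ C}
  have hA : MeasurableSet[m] A := measurableSet_le (measurable_abs.comp hf) measurable_const
  refine ⟨A.indicator f, ⟨hf.indicator hA, max C 0, fun ω => ?_⟩, ?_⟩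
  · by_cases hω : ω ∈ A
    · rw [indicator_of_mem hω]
      exact le_max_of_le_left hω
    · rw [indicator_of_notMem hω, abs_zero]
      exact le_max_right C 0
  · filter_upwards [hC] with ω hω
    exact indicator_of_mem (show ω ∈ A from hω) f

theorem condExp_add {μ : Measure[F] Ω} [IsFiniteMeasure μ] {Λ : Ω → ℝ} (hm : m ≤ F)
    (hξ : IsBddMeas F ξ) (hΛ : IsBddMeas m Λ) : μ[ξ + Λ|m] =ᵐ[μ] μ[ξ|m] + Λ := by
  have hΛF := hΛ.mono hm
  have hΛ_condExp : μ[Λ|m] = Λ :=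
    condExp_of_stronglyMeasurable hm hΛ.1.stronglyMeasurable hΛF.integrable_s10
  simpa only [hΛ_condExp] using MeasureTheory.condExp_add (hξ.integrable_s10 (μ := μ)) hΛF.integrable_s10 m

end IsBddMeas

theorem ae_le_of_measure_eq_on {Ω : Type*} {F m : MeasurableSpace Ω} {μ ν : Measure[F] Ω}
    (hνμ : ∀ A, MeasurableSet[m] A → ν A = μ A) {f g : Ω → ℝ} (hf : Measurable[m] f)
    (hg : Measurable[m] g) (h : f ≤ᵐ[ν] g) : f ≤ᵐ[μ] g := by
  rw [EventuallyLE, ae_iff] at h ⊢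
  simp only [not_le] at h ⊢
  rwa [← hνμ _ (measurableSet_lt hg hf)]

section ConditionalFenchel

variable {Ω : Type*} {m F : MeasurableSpace Ω} {μ Q : Measure[F] Ω}
  {π : (Ω → ℝ) → Ω → ℝ} {X K πs : Ω → ℝ}

theorem condExp_sub_le_condExp_sub_of_isEssInf [IsFiniteMeasure Q] (hm : m ≤ F)
    (hcash : ∀ X : Ω → ℝ, IsBddMeas F X → ∀ Λ : Ω → ℝ, IsBddMeas m Λ →
      π (X + Λ) =ᵐ[μ] π X + Λ)
    (hQ : Q ≪ μ) (hce : ∀ ξ : Ω → ℝ, IsBddMeas F ξ → ∃ C : ℝ, ∀ᵐ ω ∂μ, |(Q[ξ|m]) ω| ≤ C)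
    (hX : IsBddMeas F X)
    (hK : IsEssInf μ {g | ∃ ξ : Ω → ℝ, IsBddMeas F ξ ∧ (Q[X|m] ≤ᵐ[Q] Q[ξ|m]) ∧ g = π ξ} K)
    {ξ : Ω → ℝ} (hξ : IsBddMeas F ξ) :
    (fun ω => (Q[ξ|m]) ω - π ξ ω) ≤ᵐ[μ] fun ω => (Q[X|m]) ω - K ω := by
  obtain ⟨CX, hCX⟩ := hce X hX
  obtain ⟨Cξ, hCξ⟩ := hce ξ hξ
  obtain ⟨Λ, hΛ, hΛ_eq⟩ := IsBddMeas.exists_ae_eq (μ := μ) (C := CX + Cξ)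
    (stronglyMeasurable_condExp.measurable.sub stronglyMeasurable_condExp.measurable)
    (by filter_upwards [hCX, hCξ] with ω h₁ h₂ using (abs_sub _ _).trans (add_le_add h₁ h₂))
  have hfeas : Q[X|m] ≤ᵐ[Q] Q[ξ + Λ|m] := by
    filter_upwards [hξ.condExp_add hm hΛ, hQ.ae_le hΛ_eq] with ω h₁ h₂
    simp [h₁, h₂]
  filter_upwards [hK.1 _ ⟨ξ + Λ, hξ.add (hΛ.mono hm), hfeas, rfl⟩, hcash ξ hξ Λ hΛ, hΛ_eq]
    with ω h₁ h₂ h₃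
  simp only [h₂, h₃, Pi.add_apply, Pi.sub_apply] at h₁
  linarith

theorem condExp_sub_le_of_isEssSup (hQm : ∀ A : Set Ω, MeasurableSet[m] A → Q A = μ A)
    (hπs : IsEssSup μ
      {g | ∃ ξ : Ω → ℝ, IsBddMeas F ξ ∧ g = fun ω => (Q[ξ|m]) ω - π ξ ω} πs)
    {ξ : Ω → ℝ} (hξ : IsBddMeas F ξ) (hfeas : Q[X|m] ≤ᵐ[Q] Q[ξ|m]) :
    (fun ω => (Q[X|m]) ω - πs ω) ≤ᵐ[μ] π ξ := by
  filter_upwards [hπs.1 _ ⟨ξ, hξ, rfl⟩, ae_le_of_measure_eq_on hQm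
    stronglyMeasurable_condExp.measurable stronglyMeasurable_condExp.measurable hfeas]
    with ω h₁ h₂
  linarith

end ConditionalFenchel

theorem K_eq_condexp_sub_fenchel_general
    {Ω : Type*} [F : MeasurableSpace Ω] (μ : Measure Ω)
    (m : MeasurableSpace Ω) (hm : m ≤ F)
    (π : (Ω → ℝ) → Ω → ℝ)
    (hcash : ∀ X : Ω → ℝ, IsBddMeas F X → ∀ Λ : Ω → ℝ, IsBddMeas m Λ →
      π (X + Λ) =ᵐ[μ] π X + Λ)
    (Q : @Measure Ω F) [IsProbabilityMeasure Q] (hQ : Q ≪ μ)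
    (hQm : ∀ A : Set Ω, MeasurableSet[m] A → Q A = μ A)
    (hce : ∀ ξ : Ω → ℝ, IsBddMeas F ξ → ∃ C : ℝ, ∀ᵐ ω ∂μ, |(Q[ξ|m]) ω| ≤ C)
    (X : Ω → ℝ) (hX : IsBddMeas F X)
    (K πs : Ω → ℝ)
    (hK : IsEssInf μ
      {g | ∃ ξ : Ω → ℝ, IsBddMeas F ξ ∧ (Q[X|m] ≤ᵐ[Q] Q[ξ|m]) ∧ g = π ξ} K)
    (hπs : IsEssSup μ
      {g | ∃ ξ : Ω → ℝ, IsBddMeas F ξ ∧ g = fun ω => (Q[ξ|m]) ω - π ξ ω} πs) :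
    K =ᵐ[μ] fun ω => (Q[X|m]) ω - πs ω := by
  have hle : K ≤ᵐ[μ] fun ω => (Q[X|m]) ω - πs ω := by
    have hπs_le := hπs.2 _ <| by
      rintro _ ⟨ξ, hξ, rfl⟩
      exact condExp_sub_le_condExp_sub_of_isEssInf hm hcash hQ hce hX hK hξ
    filter_upwards [hπs_le] with ω h
    linarith
  refine hle.antisymm <| hK.2 _ ?_
  rintro _ ⟨ξ, hξ, hfeas, rfl⟩
  exact condExp_sub_le_of_isEssSup hQm hπs hξ hfeas

/-- For a monotone, regular, cash invariant `π` and `Q ≪ P` with `Q = P` on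
`G`, one has `K(X,Q) = E_Q[X|G] − π*(Q)` where `π*(Q)` is the conditional
Fenchel conjugate `ess sup_ξ (E_Q[ξ|G] − π(ξ))`. -/
theorem K_eq_condexp_sub_fenchel
    {Ω : Type*} [F : MeasurableSpace Ω] (μ : Measure Ω) [IsProbabilityMeasure μ]
    (m : MeasurableSpace Ω) (hm : m ≤ F)
    (π : (Ω → ℝ) → Ω → ℝ) (hreg : Regular F m μ π)
    (hmono : ∀ X Y : Ω → ℝ, IsBddMeas F X → IsBddMeas F Y →
      X ≤ᵐ[μ] Y → π X ≤ᵐ[μ] π Y)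
    (hcash : ∀ X : Ω → ℝ, IsBddMeas F X → ∀ Λ : Ω → ℝ, IsBddMeas m Λ →
      π (X + Λ) =ᵐ[μ] π X + Λ)
    (Q : @Measure Ω F) [IsProbabilityMeasure Q] (hQ : Q ≪ μ)
    (hQm : ∀ A : Set Ω, MeasurableSet[m] A → Q A = μ A)
    (hce : ∀ ξ : Ω → ℝ, IsBddMeas F ξ → ∃ C : ℝ, ∀ᵐ ω ∂μ, |(Q[ξ|m]) ω| ≤ C)
    (X : Ω → ℝ) (hX : IsBddMeas F X)
    (K πs : Ω → ℝ)
    (hK : IsEssInf μ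
      {g | ∃ ξ : Ω → ℝ, IsBddMeas F ξ ∧ (Q[X|m] ≤ᵐ[Q] Q[ξ|m]) ∧ g = π ξ} K)
    (hπs : IsEssSup μ
      {g | ∃ ξ : Ω → ℝ, IsBddMeas F ξ ∧ g = fun ω => (Q[ξ|m]) ω - π ξ ω} πs) :
    K =ᵐ[μ] fun ω => (Q[X|m]) ω - πs ω :=
  K_eq_condexp_sub_fenchel_general (F := F) μ m hm π hcash Q hQ hQm hce X hX K πs hK hπs
end
end

section
/- Let π : L∞(F) → L∞(G), Q ≪ P, K(X,Q) := ess inf { π(ξ) : E_Q[ξ|G] ≥_Q E_Q[X|G] }, and for each finite G-measurable partition Γ set π^Γ(X) := Σ_{A∈Γ} (ess sup_A π(X)) 1_A and K^Γ(X,Q) := ess inf { π^Γ(ξ) : E_Q[ξ|G] ≥_Q E_Q[X|G] }. Then ess inf over all finite partitions Γ of K^Γ(X,Q) equals K(X,Q). -/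
open MeasureTheory Filter Set

noncomputable section

/-- A finite partition of `Ω` into `m`-measurable sets. -/
def IsPartition {Ω : Type*} (m : MeasurableSpace Ω) (Γ : Finset (Set Ω)) : Prop :=
  (∀ A ∈ Γ, MeasurableSet[m] A) ∧
  ((Γ : Set (Set Ω)).PairwiseDisjoint id) ∧
  ⋃₀ (Γ : Set (Set Ω)) = Set.univ

/-- The step approximation `f^Γ = ∑_{A ∈ Γ} (ess sup_A f) 1_A` of a random
variable `f` along a finite partition `Γ`. -/
def partApprox {Ω : Type*} {F : MeasurableSpace Ω} (μ : @Measure Ω F)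
    (Γ : Finset (Set Ω)) (f : Ω → ℝ) : Ω → ℝ :=
  fun ω => ∑ A ∈ Γ, A.indicator (fun _ => essSup f (μ.restrict A)) ω

section Aux

open Filter

variable {Ω : Type*} {F : MeasurableSpace Ω}

/-- On a partition, `f ≤ partApprox μ Γ f` almost everywhere. -/
lemma le_partApprox_aux (μ : @Measure Ω F)
    {Γ : Finset (Set Ω)} (hmeas : ∀ A ∈ Γ, MeasurableSet A)
    (hdisj : (Γ : Set (Set Ω)).PairwiseDisjoint id)
    (hcover : ⋃₀ (Γ : Set (Set Ω)) = Set.univ)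
    {f : Ω → ℝ} {C : ℝ} (hC : ∀ ω, |f ω| ≤ C) :
    f ≤ᵐ[μ] partApprox μ Γ f := by
  have h1 : ∀ A ∈ Γ, ∀ᵐ ω ∂μ, ω ∈ A → f ω ≤ essSup f (μ.restrict A) := by
    intro A hA
    have hb : IsBoundedUnder (· ≤ ·) (ae (μ.restrict A)) f :=
      ⟨C, eventually_map.2 (Eventually.of_forall fun ω => (abs_le.1 (hC ω)).2)⟩
    have := ae_le_essSup hb
    rwa [ae_restrict_iff' (hmeas A hA)] at this
  have h2 : ∀ᵐ ω ∂μ, ∀ A ∈ (Γ : Set (Set Ω)), ω ∈ A → f ω ≤ essSup f (μ.restrict A) := by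
    rw [ae_ball_iff Γ.countable_toSet]
    exact fun A hA => h1 A hA
  filter_upwards [h2] with ω hω
  have hωA : ∃ A ∈ Γ, ω ∈ A := by
    have : ω ∈ ⋃₀ (Γ : Set (Set Ω)) := hcover ▸ Set.mem_univ ω
    simpa using this
  obtain ⟨A, hA, hωmem⟩ := hωA
  have hsum : partApprox μ Γ f ω = essSup f (μ.restrict A) := by
    rw [partApprox, Finset.sum_eq_single_of_mem A hA]
    · simp [Set.indicator_of_mem hωmem]
    · intro B hB hBA
      have hdisjBA : Disjoint B A := hdisj hB hA hBA
      have : ω ∉ B := fun hωB => Set.disjoint_left.1 hdisjBA hωB hωmem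
      simp [Set.indicator_of_notMem this]
  rw [hsum]
  exact hω A hA hωmem

/-- For a bounded `m`-measurable `f` and `ε > 0` there is a partition whose
step approximation exceeds `f` by at most `ε` a.e. -/
lemma exists_partition_partApprox_le (μ : @Measure Ω F) [IsProbabilityMeasure μ]
    (m : MeasurableSpace Ω) (hm : m ≤ F)
    {f : Ω → ℝ} (hf : Measurable[m] f) {C : ℝ} (hC : ∀ ω, |f ω| ≤ C)
    {ε : ℝ} (hε : 0 < ε) :
    ∃ Γ : Finset (Set Ω), IsPartition m Γ ∧
      partApprox μ Γ f ≤ᵐ[μ] fun ω => f ω + ε := by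
  classical
  set N : ℤ := ⌈C / ε⌉ with hN
  set pre : ℤ → Set Ω := fun k => f ⁻¹' Set.Ico (k * ε) ((k + 1) * ε) with hpre
  set Γ : Finset (Set Ω) := (Finset.Icc (-N) N).image pre with hΓ
  have hmem : ∀ ω, ∃ k ∈ Finset.Icc (-N) N, ω ∈ pre k := by
    intro ω
    refine ⟨⌊f ω / ε⌋, ?_, ?_⟩
    · rw [Finset.mem_Icc]
      constructor
      · have h1 : -(C / ε) ≤ f ω / ε := by
          rw [← neg_div]
          exact (div_le_div_iff_of_pos_right hε).2 (by linarith [(abs_le.1 (hC ω)).1])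
        calc (-N : ℤ) = -⌈C/ε⌉ := by rw [hN]
          _ = ⌊-(C/ε)⌋ := (Int.floor_neg).symm
          _ ≤ ⌊f ω / ε⌋ := Int.floor_le_floor h1
      · have h1 : f ω / ε ≤ C / ε :=
          (div_le_div_iff_of_pos_right hε).2 (abs_le.1 (hC ω)).2
        calc ⌊f ω / ε⌋ ≤ ⌊C / ε⌋ := Int.floor_le_floor h1
          _ ≤ ⌈C / ε⌉ := Int.floor_le_ceil _
    · simp only [hpre, Set.mem_preimage, Set.mem_Ico]
      constructor
      · calc (⌊f ω / ε⌋ : ℝ) * ε ≤ (f ω / ε) * ε :=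
              mul_le_mul_of_nonneg_right (Int.floor_le _) hε.le
          _ = f ω := div_mul_cancel₀ _ hε.ne'
      · calc f ω = (f ω / ε) * ε := (div_mul_cancel₀ _ hε.ne').symm
          _ < ((⌊f ω / ε⌋ : ℝ) + 1) * ε := by
              apply mul_lt_mul_of_pos_right (Int.lt_floor_add_one _) hε
  have hdisjpre : ∀ k l : ℤ, k ≠ l → Disjoint (pre k) (pre l) := by
    intro k l hkl
    apply Set.disjoint_left.2
    intro ω hωk hωl
    simp only [hpre, Set.mem_preimage, Set.mem_Ico] at hωk hωl
    rcases lt_or_gt_of_ne hkl with h | h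
    · have hkl' : (k + 1 : ℤ) ≤ l := by omega
      have : ((k : ℝ) + 1) * ε ≤ (l : ℝ) * ε := by
        apply mul_le_mul_of_nonneg_right _ hε.le
        exact_mod_cast hkl'
      linarith [hωk.2, hωl.1]
    · have hkl' : (l + 1 : ℤ) ≤ k := by omega
      have : ((l : ℝ) + 1) * ε ≤ (k : ℝ) * ε := by
        apply mul_le_mul_of_nonneg_right _ hε.le
        exact_mod_cast hkl'
      linarith [hωk.1, hωl.2]
  have hpart : IsPartition m Γ := by
    refine ⟨?_, ?_, ?_⟩
    · intro A hA
      simp only [hΓ, Finset.mem_image] at hA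
      obtain ⟨k, _, rfl⟩ := hA
      exact hf measurableSet_Ico
    · intro A hA B hB hAB
      simp only [hΓ, Finset.coe_image, Set.mem_image] at hA hB
      obtain ⟨k, _, rfl⟩ := hA
      obtain ⟨l, _, rfl⟩ := hB
      have hkl : k ≠ l := fun h => hAB (by rw [h])
      exact hdisjpre k l hkl
    · apply Set.eq_univ_of_forall
      intro ω
      obtain ⟨k, hk, hωk⟩ := hmem ω
      exact ⟨pre k, by simp only [hΓ, Finset.coe_image]; exact ⟨k, hk, rfl⟩, hωk⟩
  refine ⟨Γ, hpart, ?_⟩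
  -- a.e. ω avoids all the null members of Γ
  have hnull : ∀ᵐ ω ∂μ, ∀ A ∈ (Γ : Set (Set Ω)), μ A = 0 → ω ∉ A := by
    rw [ae_ball_iff Γ.countable_toSet]
    intro A hA
    by_cases h : μ A = 0
    · filter_upwards [measure_eq_zero_iff_ae_notMem.1 h] with ω hω
      exact fun _ => hω
    · filter_upwards with ω hω
      exact absurd hω h
  filter_upwards [hnull] with ω hω
  obtain ⟨k, hk, hωk⟩ := hmem ω
  have hAΓ : pre k ∈ Γ := by
    simp only [hΓ, Finset.mem_image]; exact ⟨k, hk, rfl⟩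
  have hApos : μ (pre k) ≠ 0 := by
    intro h; exact hω (pre k) (Finset.mem_coe.2 hAΓ) h hωk
  have hsum : partApprox μ Γ f ω = essSup f (μ.restrict (pre k)) := by
    rw [partApprox, Finset.sum_eq_single_of_mem _ hAΓ]
    · simp [Set.indicator_of_mem hωk]
    · intro B hB hBA
      simp only [hΓ, Finset.mem_image] at hB
      obtain ⟨l, _, rfl⟩ := hB
      have hkl : l ≠ k := fun h => hBA (by rw [h])
      have : ω ∉ pre l := fun hωl =>
        Set.disjoint_left.1 (hdisjpre l k hkl) hωl hωk
      simp [Set.indicator_of_notMem this]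
  rw [hsum]
  have hpm : MeasurableSet[m] (pre k) := by
    rw [hpre]; exact hf measurableSet_Ico
  have hpreF : MeasurableSet[F] (pre k) := hm _ hpm
  have hco : IsCoboundedUnder (· ≤ ·) (ae (μ.restrict (pre k))) f := by
    have hbdd : IsBoundedUnder (· ≥ ·) (ae (μ.restrict (pre k))) f :=
      ⟨-C, eventually_map.2 (Eventually.of_forall fun ω' => (abs_le.1 (hC ω')).1)⟩
    haveI hne : (ae (μ.restrict (pre k))).NeBot :=
      ae_neBot.2 fun h => hApos (Measure.restrict_eq_zero.1 h)
    exact hbdd.isCoboundedUnder_le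
  have hub : essSup f (μ.restrict (pre k)) ≤ ((k : ℝ) + 1) * ε := by
    apply limsup_le_of_le hco
    rw [ae_restrict_iff' hpreF]
    filter_upwards with ω' hω'
    exact le_of_lt hω'.2
  have hlb : ((k : ℤ) : ℝ) * ε ≤ f ω := hωk.1
  calc essSup f (μ.restrict (pre k)) ≤ ((k : ℝ) + 1) * ε := hub
    _ = (k : ℝ) * ε + ε := by ring
    _ ≤ f ω + ε := by linarith

end Aux

/-- `ess inf_Γ K^Γ(X,Q) = K(X,Q)`: the essential infimum over all finite
`G`-measurable partitions `Γ` of the approximated values `K^Γ(X,Q)`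
(defined with `π^Γ` in place of `π`) is `K(X,Q)`. -/
theorem essInf_partition_K
    {Ω : Type*} [F : MeasurableSpace Ω] (μ : Measure Ω) [IsProbabilityMeasure μ]
    (m : MeasurableSpace Ω) (hm : m ≤ F)
    (π : (Ω → ℝ) → Ω → ℝ)
    (hπbdd : ∀ ξ : Ω → ℝ, IsBddMeas F ξ → IsBddMeas m (π ξ))
    (Q : @Measure Ω F) [IsProbabilityMeasure Q] (hQ : Q ≪ μ)
    (X : Ω → ℝ) (hX : IsBddMeas F X)
    (K : Ω → ℝ)
    (hK : IsEssInf μ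
      {g | ∃ ξ : Ω → ℝ, IsBddMeas F ξ ∧ (Q[X|m] ≤ᵐ[Q] Q[ξ|m]) ∧ g = π ξ} K)
    (KΓ : Finset (Set Ω) → Ω → ℝ)
    (hKΓ : ∀ Γ : Finset (Set Ω), IsPartition m Γ → IsEssInf μ
      {g | ∃ ξ : Ω → ℝ, IsBddMeas F ξ ∧ (Q[X|m] ≤ᵐ[Q] Q[ξ|m]) ∧
        g = partApprox μ Γ (π ξ)} (KΓ Γ)) :
    IsEssInf μ {g | ∃ Γ : Finset (Set Ω), IsPartition m Γ ∧ g = KΓ Γ} K := by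
  obtain ⟨hK1, hK2⟩ := hK
  constructor
  · rintro g ⟨Γ, hΓ, rfl⟩
    refine (hKΓ Γ hΓ).2 K ?_
    rintro h ⟨ξ, hξ, hcond, rfl⟩
    have h1 : K ≤ᵐ[μ] π ξ := hK1 _ ⟨ξ, hξ, hcond, rfl⟩
    obtain ⟨hπm, C, hCb⟩ := hπbdd ξ hξ
    have h2 : π ξ ≤ᵐ[μ] partApprox μ Γ (π ξ) :=
      le_partApprox_aux μ (fun A hA => hm _ (hΓ.1 A hA)) hΓ.2.1 hΓ.2.2 hCb
    exact h1.trans h2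
  · intro g hg
    refine hK2 g ?_
    rintro h ⟨ξ, hξ, hcond, rfl⟩
    obtain ⟨hπm, C, hCb⟩ := hπbdd ξ hξ
    have key : ∀ n : ℕ, g ≤ᵐ[μ] fun ω => π ξ ω + 1 / (n + 1) := by
      intro n
      have hε : (0 : ℝ) < 1 / (n + 1) := by positivity
      obtain ⟨Γ, hΓ, happ⟩ := exists_partition_partApprox_le μ m hm hπm hCb hε
      have h1 : g ≤ᵐ[μ] KΓ Γ := hg _ ⟨Γ, hΓ, rfl⟩
      have h2 : KΓ Γ ≤ᵐ[μ] partApprox μ Γ (π ξ) :=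
        (hKΓ Γ hΓ).1 _ ⟨ξ, hξ, hcond, rfl⟩
      exact (h1.trans h2).trans happ
    have key' : ∀ᵐ ω ∂μ, ∀ n : ℕ, g ω ≤ π ξ ω + 1 / (n + 1) :=
      ae_all_iff.2 fun n => key n
    filter_upwards [key'] with ω hω
    apply le_of_forall_pos_le_add
    intro ε hε
    obtain ⟨n, hn⟩ := exists_nat_one_div_lt hε
    exact (hω n).trans (by linarith [hn.le])
end
end
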